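/- Let f₁,…,f_s be homogeneous polynomials of degree δ in K[x₁,…,xₙ] and let G be the reduced grevlex Gröbner basis of I = ⟨f₁,…,f_s⟩. Fix j ∈ {1,…,n}. Then the reduced grevlex Gröbner basis of the ideal of K[x₁,…,x_j] generated by φ_j(f₁),…,φ_j(f_s) (obtained by setting x_{j+1} = ⋯ = xₙ = 0) is exactly { φ_j(g) : g ∈ G, LM(g) ∈ K[x₁,…,x_j] }. -/

import Mathlib

open MvPolynomial

/-- Total degree of an exponent vector. -/
def expDeg {n : ℕ} (m : Fin n →₀ ℕ) : ℕ := m.sum fun _ e => e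

/-- Graded reverse lexicographic strict order with `x₁ ≻ ⋯ ≻ xₙ`: `a ≺ b` iff
`deg a < deg b`, or the degrees agree and at the last index where they differ `a` has the
larger exponent. -/
def GrevlexLt {n : ℕ} (a b : Fin n →₀ ℕ) : Prop :=
  expDeg a < expDeg b ∨
    (expDeg a = expDeg b ∧ ∃ i : Fin n, b i < a i ∧ ∀ j : Fin n, i < j → a j = b j)

/-- `μ` is the leading monomial of `f` with respect to the strict order `lt`. -/
def IsLM {K : Type*} [Field K] {n : ℕ}
    (lt : (Fin n →₀ ℕ) → (Fin n →₀ ℕ) → Prop)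
    (f : MvPolynomial (Fin n) K) (μ : Fin n →₀ ℕ) : Prop :=
  μ ∈ f.support ∧ ∀ ν ∈ f.support, ν = μ ∨ lt ν μ

/-- The set of leading monomials of nonzero elements of an ideal. -/
def LMset {K : Type*} [Field K] {n : ℕ}
    (lt : (Fin n →₀ ℕ) → (Fin n →₀ ℕ) → Prop)
    (I : Ideal (MvPolynomial (Fin n) K)) : Set (Fin n →₀ ℕ) :=
  {μ | ∃ f ∈ I, IsLM lt f μ}

/-- The truncation `φ_j` setting the variables `x_{j+1},…,xₙ` to `0`, viewed as a map
into `K[x₁,…,x_j]`. -/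
noncomputable def truncMap (K : Type*) [Field K] {n : ℕ} (j : ℕ) (hj : j ≤ n) :
    MvPolynomial (Fin n) K →ₐ[K] MvPolynomial (Fin j) K :=
  MvPolynomial.aeval (fun k : Fin n =>
    if h : (k : ℕ) < j then MvPolynomial.X ⟨(k : ℕ), h⟩ else 0)

/-- `G` is the reduced Gröbner basis of `I` with respect to the monomial order `lt`. -/
def IsReducedGB {K : Type*} [Field K] {n : ℕ}
    (lt : (Fin n →₀ ℕ) → (Fin n →₀ ℕ) → Prop)
    (I : Ideal (MvPolynomial (Fin n) K)) (G : Set (MvPolynomial (Fin n) K)) : Prop :=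
  G.Finite ∧
  (∀ g ∈ G, g ≠ 0 ∧ g ∈ I) ∧
  (∀ f ∈ I, f ≠ 0 → ∃ g ∈ G, ∃ μ ν, IsLM lt g μ ∧ IsLM lt f ν ∧ μ ≤ ν) ∧
  (∀ g ∈ G, ∀ μ, IsLM lt g μ → g.coeff μ = 1) ∧
  (∀ g ∈ G, ∀ g' ∈ G, g ≠ g' → ∀ μ ν, IsLM lt g' μ → ν ∈ g.support → ¬ μ ≤ ν)

/-!
The ideal `I = ⟨f₁,…,f_s⟩` is homogeneous and `φ_j` maps it onto `J = ⟨φ_j(f₁),…,φ_j(f_s)⟩`.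
Among monomials of one degree, grevlex ranks every monomial involving one of `x_{j+1},…,xₙ`
below every monomial in `x₁,…,x_j` alone; so for homogeneous `P`, `LM(φ_j P) = ν` forces
`LM(P) = ν`. Applied to a homogeneous lift to `I` of the degree-`deg ν` component of `h ∈ J`,
this shows that every leading monomial of `J` is one of `I`, hence a multiple of `LM(g)` for
some `g ∈ G`, and such an `LM(g)` lies in `K[x₁,…,x_j]`. Monicity and reducedness pass from `g`
to `φ_j(g)` because `φ_j` only deletes terms.
-/

attribute [local instance] MvPolynomial.gradedAlgebra

section LeadingMonomial

variable {K : Type*} [Field K] {n : ℕ} {lt : (Fin n →₀ ℕ) → (Fin n →₀ ℕ) → Prop}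
  {p : MvPolynomial (Fin n) K} {μ ν : Fin n →₀ ℕ}

lemma IsLM.ne_zero (h : IsLM lt p μ) : p ≠ 0 := by
  rintro rfl
  simpa using h.1

lemma IsLM.unique [Std.Asymm lt] (h : IsLM lt p μ) (h' : IsLM lt p ν) : μ = ν := by
  rcases h'.2 μ h.1 with rfl | hμν
  · rfl
  rcases h.2 ν h'.1 with rfl | hνμ
  · rfl
  · exact (asymm hμν hνμ).elim

lemma exists_isLM [IsStrictTotalOrder _ lt] (hp : p ≠ 0) : ∃ μ, IsLM lt p μ := by
  have : IsTrans p.support (fun a b => lt b a) := ⟨fun _ _ _ h₁ h₂ => _root_.trans h₂ h₁⟩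
  have : Std.Irrefl (fun a b : p.support => lt b a) := ⟨fun a => irrefl (a : Fin n →₀ ℕ)⟩
  have : Nonempty p.support := (support_nonempty.mpr hp).to_subtype
  obtain ⟨⟨μ, hμ⟩, -, hmax⟩ :=
    (Finite.wellFounded_of_trans_of_irrefl (fun a b : p.support => lt b a)).has_min
      Set.univ Set.univ_nonempty
  refine ⟨μ, hμ, fun ν hν => ?_⟩
  rcases trichotomous_of lt ν μ with h | h | h
  · exact Or.inr h
  · exact Or.inl h
  · exact (hmax ⟨ν, hν⟩ trivial h).elim

lemma IsLM.homogeneousComponent (h : IsLM lt p μ) :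
    IsLM lt (homogeneousComponent μ.degree p) μ := by
  refine ⟨?_, fun ν hν => h.2 ν ?_⟩
  · simpa [mem_support_iff, coeff_homogeneousComponent] using h.1
  · rw [mem_support_iff, coeff_homogeneousComponent] at hν
    rw [mem_support_iff]
    split_ifs at hν
    · exact hν
    · exact (hν rfl).elim

end LeadingMonomial

section Grevlex

variable {n : ℕ}

lemma GrevlexLt.irrefl (a : Fin n →₀ ℕ) : ¬ GrevlexLt a a := by
  rintro (h | ⟨-, i, hi, -⟩) <;> omega

lemma GrevlexLt.trans {a b c : Fin n →₀ ℕ} (hab : GrevlexLt a b) (hbc : GrevlexLt b c) :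
    GrevlexLt a c := by
  rcases hab with hab | ⟨eab, i, hi, hai⟩ <;> rcases hbc with hbc | ⟨ebc, k, hk, hbk⟩
  · exact Or.inl (hab.trans hbc)
  · exact Or.inl (ebc ▸ hab)
  · exact Or.inl (eab ▸ hbc)
  refine Or.inr ⟨eab.trans ebc, ?_⟩
  rcases lt_trichotomy i k with hik | rfl | hki
  · exact ⟨k, hai k hik ▸ hk, fun l hl => (hai l (hik.trans hl)).trans (hbk l hl)⟩
  · exact ⟨i, hk.trans hi, fun l hl => (hai l hl).trans (hbk l hl)⟩
  · exact ⟨i, hbk i hki ▸ hi, fun l hl => (hai l hl).trans (hbk l (hki.trans hl))⟩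

lemma GrevlexLt.eq_of_not_of_not {a b : Fin n →₀ ℕ} (hab : ¬ GrevlexLt a b)
    (hba : ¬ GrevlexLt b a) : a = b := by
  by_contra hne
  have hdeg : expDeg a = expDeg b := by
    by_contra h
    rcases Nat.lt_or_gt_of_ne h with h | h
    exacts [hab (Or.inl h), hba (Or.inl h)]
  obtain ⟨i, hi⟩ := (Set.toFinite {i | a i ≠ b i}).exists_maximal
    (by simpa [Finsupp.ext_iff, Set.Nonempty] using hne)
  have hagree : ∀ k, i < k → a k = b k := fun k hk => not_not.mp fun h => hi.not_gt h hk
  rcases Nat.lt_or_gt_of_ne hi.prop with h | h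
  · exact hba (Or.inr ⟨hdeg.symm, i, h, fun k hk => (hagree k hk).symm⟩)
  · exact hab (Or.inr ⟨hdeg, i, h, hagree⟩)

instance : IsStrictTotalOrder (Fin n →₀ ℕ) GrevlexLt where
  irrefl := GrevlexLt.irrefl
  trans _ _ _ := GrevlexLt.trans
  trichotomous _ _ := GrevlexLt.eq_of_not_of_not

lemma expDeg_eq_degree (m : Fin n →₀ ℕ) : expDeg m = m.degree := rfl

lemma grevlexLt_of_expDeg_eq_of_tail_eq_zero {j : ℕ} {a b : Fin n →₀ ℕ}
    (hdeg : expDeg a = expDeg b) (hb : ∀ k : Fin n, j ≤ k → b k = 0)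
    (ha : ∃ k : Fin n, j ≤ k ∧ a k ≠ 0) : GrevlexLt a b := by
  obtain ⟨k, hjk, hk⟩ := ha
  obtain ⟨i, hi⟩ := (Set.toFinite {i | a i ≠ 0}).exists_maximal ⟨k, hk⟩
  have hji : j ≤ (i : ℕ) := hjk.trans (Fin.le_def.mp (not_lt.mp (hi.not_gt hk)))
  refine Or.inr ⟨hdeg, i, ?_, fun l hl => ?_⟩
  · rw [hb i hji]
    exact Nat.pos_of_ne_zero hi.prop
  · rw [hb l (hji.trans (Fin.lt_def.mp hl).le)]
    exact not_not.mp fun h => hi.not_gt h hl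

end Grevlex

section Embedding

variable {n j : ℕ} (hj : j ≤ n)

lemma mapDomain_castLE_apply {M : Type*} [AddCommMonoid M] (a : Fin j →₀ M) (k : Fin n) :
    a.mapDomain (Fin.castLE hj) k = if h : (k : ℕ) < j then a ⟨k, h⟩ else 0 := by
  split_ifs with h
  · simpa using Finsupp.mapDomain_apply (Fin.castLE_injective hj) a ⟨k, h⟩
  · refine Finsupp.mapDomain_of_notMem_range _ _ ?_
    rintro ⟨i, rfl⟩
    exact h (by simp)

lemma exists_mapDomain_castLE_eq {μ : Fin n →₀ ℕ} (hμ : ∀ k : Fin n, j ≤ k → μ k = 0) :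
    ∃ a : Fin j →₀ ℕ, a.mapDomain (Fin.castLE hj) = μ := by
  refine ⟨_, Finsupp.mapDomain_comapDomain _ (Fin.castLE_injective hj) μ fun k hk => ?_⟩
  have hkj : (k : ℕ) < j := by
    by_contra h
    exact (Finsupp.mem_support_iff.mp hk) (hμ k (by omega))
  exact ⟨⟨k, hkj⟩, rfl⟩

lemma grevlexLt_mapDomain_castLE_iff {a b : Fin j →₀ ℕ} :
    GrevlexLt (a.mapDomain (Fin.castLE hj)) (b.mapDomain (Fin.castLE hj)) ↔ GrevlexLt a b := by
  simp only [GrevlexLt, expDeg_eq_degree, Finsupp.degree_mapDomain, mapDomain_castLE_apply]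
  refine or_congr Iff.rfl (and_congr Iff.rfl ⟨?_, ?_⟩)
  · rintro ⟨i, hi, hagree⟩
    have hij : (i : ℕ) < j := by
      by_contra h
      simp [h] at hi
    refine ⟨⟨i, hij⟩, by simpa [hij] using hi, fun l hl => ?_⟩
    simpa [l.isLt] using hagree (Fin.castLE hj l) (Fin.lt_def.mpr (Fin.lt_def.mp hl))
  · rintro ⟨i, hi, hagree⟩
    refine ⟨Fin.castLE hj i, by simpa using hi, fun l hl => ?_⟩
    split_ifs with h
    · exact hagree _ (Fin.lt_def.mpr (Fin.lt_def.mp hl))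
    · rfl

end Embedding

section Truncation

variable {K : Type*} [Field K] {n j : ℕ} (hj : j ≤ n)

lemma truncMap_eq_killCompl : truncMap K j hj = killCompl (Fin.castLE_injective hj) := by
  refine algHom_ext fun k => ?_
  simp only [truncMap, killCompl, aeval_X]
  by_cases hk : (k : ℕ) < j
  · have hrange : k ∈ Set.range (Fin.castLE hj) := ⟨⟨k, hk⟩, rfl⟩
    rw [dif_pos hk, dif_pos hrange]
    congr 1
    apply Fin.castLE_injective hj
    rw [Equiv.apply_ofInjective_symm (Fin.castLE_injective hj)]
    rfl
  · have hrange : k ∉ Set.range (Fin.castLE hj) := by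
      rintro ⟨i, rfl⟩
      exact hk (by simp)
    rw [dif_neg hk, dif_neg hrange]

lemma coeff_truncMap (p : MvPolynomial (Fin n) K) (a : Fin j →₀ ℕ) :
    coeff a (truncMap K j hj p) = coeff (a.mapDomain (Fin.castLE hj)) p := by
  rw [truncMap_eq_killCompl, coeff_killCompl]

lemma truncMap_surjective : Function.Surjective (truncMap K j hj) :=
  fun p => ⟨rename (Fin.castLE hj) p, by rw [truncMap_eq_killCompl, killCompl_rename_app]⟩

lemma truncMap_homogeneousComponent (d : ℕ) (p : MvPolynomial (Fin n) K) :
    truncMap K j hj (homogeneousComponent d p) = homogeneousComponent d (truncMap K j hj p) := by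
  ext a
  simp only [coeff_truncMap, coeff_homogeneousComponent, Finsupp.degree_mapDomain]

lemma mem_support_truncMap_iff {p : MvPolynomial (Fin n) K} {a : Fin j →₀ ℕ} :
    a ∈ (truncMap K j hj p).support ↔ a.mapDomain (Fin.castLE hj) ∈ p.support := by
  rw [mem_support_iff, mem_support_iff, coeff_truncMap]

variable {hj}

lemma IsLM.exists_truncMap {g : MvPolynomial (Fin n) K} {μ : Fin n →₀ ℕ}
    (h : IsLM GrevlexLt g μ) (htail : ∀ k : Fin n, j ≤ k → μ k = 0) :
    ∃ a, a.mapDomain (Fin.castLE hj) = μ ∧ IsLM GrevlexLt (truncMap K j hj g) a := by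
  obtain ⟨a, rfl⟩ := exists_mapDomain_castLE_eq hj htail
  refine ⟨a, rfl, (mem_support_truncMap_iff hj).mpr h.1, fun b hb => ?_⟩
  rcases h.2 _ ((mem_support_truncMap_iff hj).mp hb) with hba | hba
  · exact Or.inl (Finsupp.mapDomain_injective (Fin.castLE_injective hj) hba)
  · exact Or.inr ((grevlexLt_mapDomain_castLE_iff hj).mp hba)

lemma IsLM.of_truncMap {P : MvPolynomial (Fin n) K} {d : ℕ} (hP : P.IsHomogeneous d)
    {a : Fin j →₀ ℕ} (h : IsLM GrevlexLt (truncMap K j hj P) a) :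
    IsLM GrevlexLt P (a.mapDomain (Fin.castLE hj)) := by
  have hdeg : ∀ κ ∈ P.support, κ.degree = d := fun κ hκ =>
    not_not.mp fun hne => mem_support_iff.mp hκ (hP.coeff_eq_zero hne)
  have ha : a.mapDomain (Fin.castLE hj) ∈ P.support := (mem_support_truncMap_iff hj).mp h.1
  refine ⟨ha, fun κ hκ => ?_⟩
  by_cases htail : ∀ k : Fin n, j ≤ k → κ k = 0
  · obtain ⟨b, rfl⟩ := exists_mapDomain_castLE_eq hj htail
    rcases h.2 b ((mem_support_truncMap_iff hj).mpr hκ) with rfl | hba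
    · exact Or.inl rfl
    · exact Or.inr ((grevlexLt_mapDomain_castLE_iff hj).mpr hba)
  · push Not at htail
    refine Or.inr (grevlexLt_of_expDeg_eq_of_tail_eq_zero ?_ (fun k hk => ?_) htail)
    · rw [expDeg_eq_degree, expDeg_eq_degree, hdeg κ hκ, hdeg _ ha]
    · rw [mapDomain_castLE_apply, dif_neg (by omega)]

lemma mapDomain_castLE_mem_LMset {I : Ideal (MvPolynomial (Fin n) K)}
    (hI : I.IsHomogeneous (homogeneousSubmodule (Fin n) K)) {ν : Fin j →₀ ℕ}
    (hν : ν ∈ LMset GrevlexLt (I.map (truncMap K j hj))) :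
    ν.mapDomain (Fin.castLE hj) ∈ LMset GrevlexLt I := by
  obtain ⟨_, hJ, hLM⟩ := hν
  obtain ⟨H, hH, rfl⟩ := (Ideal.mem_map_iff_of_surjective _ (truncMap_surjective hj)).mp hJ
  refine ⟨homogeneousComponent ν.degree H, homogeneousComponent_mem_of_mem hI hH _, ?_⟩
  refine IsLM.of_truncMap (homogeneousComponent_isHomogeneous _ _) ?_
  rw [truncMap_homogeneousComponent]
  exact hLM.homogeneousComponent

lemma exists_isLM_le_of_mem_map_truncMap {I : Ideal (MvPolynomial (Fin n) K)}
    (hI : I.IsHomogeneous (homogeneousSubmodule (Fin n) K)) {G : Set (MvPolynomial (Fin n) K)}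
    (hGdiv : ∀ f ∈ I, f ≠ 0 → ∃ g ∈ G, ∃ μ ν, IsLM GrevlexLt g μ ∧ IsLM GrevlexLt f ν ∧ μ ≤ ν)
    {h : MvPolynomial (Fin j) K} (hh : h ∈ I.map (truncMap K j hj)) {ν : Fin j →₀ ℕ}
    (hν : IsLM GrevlexLt h ν) :
    ∃ g' ∈ truncMap K j hj '' {g ∈ G | ∃ μ, IsLM GrevlexLt g μ ∧ ∀ k : Fin n, j ≤ k → μ k = 0},
      ∃ a, IsLM GrevlexLt g' a ∧ a ≤ ν := by
  obtain ⟨H, hH, hHν⟩ := mapDomain_castLE_mem_LMset hI ⟨h, hh, hν⟩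
  obtain ⟨g, hg, μ, _, hμ, hHν', hμν⟩ := hGdiv H hH hHν.ne_zero
  rw [hHν'.unique hHν] at hμν
  have htail : ∀ k : Fin n, j ≤ k → μ k = 0 := fun k hk =>
    Nat.eq_zero_of_le_zero (by simpa [mapDomain_castLE_apply, hk.not_gt] using hμν k)
  obtain ⟨a, rfl, ha⟩ := hμ.exists_truncMap (hj := hj) htail
  exact ⟨_, ⟨g, ⟨hg, _, hμ, htail⟩, rfl⟩, a, ha,
    (Finsupp.mapDomain_le_mapDomain_iff_le (Fin.castLE_injective hj) _ _).mp hμν⟩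

end Truncation

theorem stmt_8_general {K : Type*} [Field K] {n s : ℕ}
    (f : Fin s → MvPolynomial (Fin n) K) (δ : ℕ)
    (hf : ∀ i, (f i).IsHomogeneous δ)
    (G : Set (MvPolynomial (Fin n) K))
    (hG : IsReducedGB (GrevlexLt (n := n)) (Ideal.span (Set.range f)) G)
    (j : ℕ) (hj : j ≤ n) :
    IsReducedGB (GrevlexLt (n := j))
      (Ideal.span (Set.range fun i => truncMap K j hj (f i)))
      ((truncMap K j hj) ''
        {g ∈ G | ∃ μ, IsLM (GrevlexLt (n := n)) g μ ∧
          ∀ k : Fin n, j ≤ (k : ℕ) → μ k = 0}) := by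
  obtain ⟨hGfin, hGmem, hGdiv, hGmonic, hGred⟩ := hG
  have hI : (Ideal.span (Set.range f)).IsHomogeneous (homogeneousSubmodule (Fin n) K) :=
    Ideal.homogeneous_span _ _ (by rintro _ ⟨i, rfl⟩; exact ⟨δ, hf i⟩)
  have hJ : Ideal.span (Set.range fun i => truncMap K j hj (f i)) =
      (Ideal.span (Set.range f)).map (truncMap K j hj) := by
    rw [Ideal.map_span, ← Set.range_comp]
    rfl
  rw [hJ]
  refine ⟨(hGfin.subset (Set.sep_subset _ _)).image _, ?_, ?_, ?_, ?_⟩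
  · rintro _ ⟨g, ⟨hg, μ, hμ, htail⟩, rfl⟩
    obtain ⟨a, rfl, ha⟩ := hμ.exists_truncMap (hj := hj) htail
    exact ⟨ha.ne_zero, Ideal.mem_map_of_mem _ (hGmem g hg).2⟩
  · intro h hh h0
    obtain ⟨ν, hν⟩ := exists_isLM (lt := GrevlexLt) h0
    obtain ⟨g', hg', a, ha, haν⟩ := exists_isLM_le_of_mem_map_truncMap hI hGdiv hh hν
    exact ⟨g', hg', a, ν, ha, hν, haν⟩
  · rintro _ ⟨g, ⟨hg, μ, hμ, htail⟩, rfl⟩ b hb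
    obtain ⟨a, rfl, ha⟩ := hμ.exists_truncMap (hj := hj) htail
    rw [hb.unique ha, coeff_truncMap]
    exact hGmonic g hg _ hμ
  · rintro _ ⟨g₁, ⟨hg₁, -⟩, rfl⟩ _ ⟨g₂, ⟨hg₂, μ, hμ, htail⟩, rfl⟩ hne b ν hb hν hbν
    obtain ⟨a, rfl, ha⟩ := hμ.exists_truncMap (hj := hj) htail
    rw [hb.unique ha] at hbν
    exact hGred g₁ hg₁ g₂ hg₂ (fun h => hne (h ▸ rfl)) _ _ hμ ((mem_support_truncMap_iff hj).mp hν)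
      ((Finsupp.mapDomain_le_mapDomain_iff_le (Fin.castLE_injective hj) _ _).mpr hbν)

/-- if `G` is the reduced grevlex Gröbner basis of `I = ⟨f₁,…,f_s⟩` with all
`fᵢ` homogeneous of degree `δ`, then the reduced grevlex Gröbner basis of the ideal of
`K[x₁,…,x_j]` generated by `φ_j(f₁),…,φ_j(f_s)` is exactly
`{φ_j(g) : g ∈ G, LM(g) ∈ K[x₁,…,x_j]}`. -/
theorem stmt_8 {K : Type*} [Field K] {n s : ℕ}
    (f : Fin s → MvPolynomial (Fin n) K) (δ : ℕ)
    (hf : ∀ i, (f i).IsHomogeneous δ)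
    (G : Set (MvPolynomial (Fin n) K))
    (hG : IsReducedGB (GrevlexLt (n := n)) (Ideal.span (Set.range f)) G)
    (j : ℕ) (hj1 : 1 ≤ j) (hj : j ≤ n) :
    IsReducedGB (GrevlexLt (n := j))
      (Ideal.span (Set.range fun i => truncMap K j hj (f i)))
      ((truncMap K j hj) ''
        {g ∈ G | ∃ μ, IsLM (GrevlexLt (n := n)) g μ ∧
          ∀ k : Fin n, j ≤ (k : ℕ) → μ k = 0}) :=
  stmt_8_general f δ hf G hG j hj
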